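/- Let T, U be closed subspaces of H with cos(φ_{T,U}) > 0, (u_j) a frame for U with frame bounds A, B and frame operator S = UU*. Then for all g ∈ T one has ‖Sg‖ ≥ A cos(φ_{T,U}) ‖g‖; in particular S(T) is a closed subspace of H. -/

import Mathlib

noncomputable section
open scoped InnerProductSpace ENNReal

/-- The sequence space ℓ²(ℕ). -/
abbrev Lp2 : Type := lp (fun _ : ℕ => ℂ) 2

/-- `u` is a frame for the subspace `U` with frame bounds `A` and `B`:
`A‖f‖² ≤ Σ_j |⟨f,u_j⟩|² ≤ B‖f‖²` for all `f ∈ U`, and all `u_j ∈ U`. -/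
def IsFrameFor {H : Type} [NormedAddCommGroup H] [InnerProductSpace ℂ H]
    (u : ℕ → H) (U : Submodule ℂ H) (A B : ℝ) : Prop :=
  (∀ j, u j ∈ U) ∧
    ∀ f ∈ U, A * ‖f‖ ^ 2 ≤ ∑' j, ‖⟪u j, f⟫_ℂ‖ ^ 2 ∧
      ∑' j, ‖⟪u j, f⟫_ℂ‖ ^ 2 ≤ B * ‖f‖ ^ 2

/-- `cos(φ_{T,U}) = inf_{g ∈ T, ‖g‖=1} ‖P_U g‖` (orthogonal-projection form). -/
def cosAngleP {H : Type} [NormedAddCommGroup H] [InnerProductSpace ℂ H]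
    [CompleteSpace H] (T U : Submodule ℂ H) [CompleteSpace U] : ℝ :=
  sInf {r : ℝ | ∃ g ∈ T, ‖g‖ = 1 ∧ r = ‖(U.orthogonalProjectionOnto g : H)‖}

/-- `cos(φ_{T,Y}) = inf_{g ∈ T, ‖g‖=1} sup_{v ∈ Y, ‖v‖=1} |⟨g,v⟩|` (inner-product form,
for a general subset `Y`). -/
def cosAngleS {H : Type} [NormedAddCommGroup H] [InnerProductSpace ℂ H]
    (T : Submodule ℂ H) (Y : Set H) : ℝ :=
  sInf {r : ℝ | ∃ g ∈ T, ‖g‖ = 1 ∧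
    r = sSup {s : ℝ | ∃ v ∈ Y, ‖v‖ = 1 ∧ s = ‖⟪g, v⟫_ℂ‖}}

/-!
Since every `u j` lies in `U`, the frame operator only sees `P_U g`, so `S g = S (P_U g)`. On `U`
the lower frame bound gives `A‖f‖² ≤ Re ⟪f, S f⟫ ≤ ‖f‖‖S f‖`, and on `T` the angle gives
`‖P_U g‖ ≥ cos(φ_{T,U}) ‖g‖`. A map bounded below on a complete subspace has closed image.
-/

section FrameOperator

variable {𝕜 H ι : Type*} [RCLike 𝕜] [NormedAddCommGroup H] [InnerProductSpace 𝕜 H]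
  {u : ι → H} {S : H →L[𝕜] H}

theorem hasSum_norm_inner_sq_of_hasSum_frame (hS : ∀ f, HasSum (fun j => ⟪u j, f⟫_𝕜 • u j) (S f))
    (f : H) : HasSum (fun j => ‖⟪u j, f⟫_𝕜‖ ^ 2) (RCLike.re ⟪f, S f⟫_𝕜) := by
  have hsum : HasSum (fun j => ((‖⟪u j, f⟫_𝕜‖ ^ 2 : ℝ) : 𝕜)) ⟪f, S f⟫_𝕜 := by
    refine ((innerSL 𝕜 f).hasSum (hS f)).congr_fun fun j => ?_
    simp only [innerSL_apply_apply, inner_smul_right, ← inner_conj_symm f (u j), RCLike.mul_conj,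
      RCLike.ofReal_pow]
  simpa only [RCLike.reCLM_apply, RCLike.ofReal_re] using RCLike.reCLM.hasSum hsum

theorem mul_norm_le_norm_of_hasSum_frame (hS : ∀ f, HasSum (fun j => ⟪u j, f⟫_𝕜 • u j) (S f))
    {A : ℝ} {f : H} (hf : A * ‖f‖ ^ 2 ≤ ∑' j, ‖⟪u j, f⟫_𝕜‖ ^ 2) : A * ‖f‖ ≤ ‖S f‖ := by
  rcases eq_or_ne f 0 with rfl | hf0
  · simp
  have hquad : A * ‖f‖ * ‖f‖ ≤ ‖S f‖ * ‖f‖ :=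
    calc A * ‖f‖ * ‖f‖ ≤ RCLike.re ⟪f, S f⟫_𝕜 := by
          rw [(hasSum_norm_inner_sq_of_hasSum_frame hS f).tsum_eq] at hf; linarith
      _ ≤ ‖⟪f, S f⟫_𝕜‖ := RCLike.re_le_norm _
      _ ≤ ‖S f‖ * ‖f‖ := by rw [mul_comm]; exact norm_inner_le_norm _ _
  exact le_of_mul_le_mul_right hquad (norm_pos_iff.2 hf0)

theorem map_starProjection_of_hasSum_frame (hS : ∀ f, HasSum (fun j => ⟪u j, f⟫_𝕜 • u j) (S f))
    (U : Submodule 𝕜 H) [U.HasOrthogonalProjection] (hu : ∀ j, u j ∈ U) (g : H) :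
    S (U.starProjection g) = S g := by
  refine (hS _).unique ((hS g).congr_fun fun j => ?_)
  rw [← U.inner_starProjection_left_eq_right, U.starProjection_eq_self_iff.2 (hu j)]

end FrameOperator

theorem cosAngleP_mul_norm_le {H : Type} [NormedAddCommGroup H] [InnerProductSpace ℂ H]
    [CompleteSpace H] {T U : Submodule ℂ H} [CompleteSpace U] {g : H} (hg : g ∈ T) :
    cosAngleP T U * ‖g‖ ≤ ‖U.starProjection g‖ := by
  rcases eq_or_ne g 0 with rfl | hg0
  · simp
  have hgpos : 0 < ‖g‖ := norm_pos_iff.2 hg0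
  have hbdd : BddBelow
      {r : ℝ | ∃ g ∈ T, ‖g‖ = 1 ∧ r = ‖(U.orthogonalProjectionOnto g : H)‖} :=
    ⟨0, by rintro r ⟨g, -, -, rfl⟩; positivity⟩
  have hunit : ‖g‖⁻¹ * ‖U.starProjection g‖ ∈
      {r : ℝ | ∃ g ∈ T, ‖g‖ = 1 ∧ r = ‖(U.orthogonalProjectionOnto g : H)‖} := by
    refine ⟨(‖g‖⁻¹ : ℂ) • g, T.smul_mem _ hg, ?_, ?_⟩
    · rw [norm_smul, norm_inv, Complex.norm_real, norm_norm, inv_mul_cancel₀ hgpos.ne']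
    · rw [map_smul, Submodule.coe_smul, norm_smul, norm_inv, Complex.norm_real, norm_norm]; rfl
  calc cosAngleP T U * ‖g‖ ≤ ‖g‖⁻¹ * ‖U.starProjection g‖ * ‖g‖ := by
        gcongr; exact csInf_le hbdd hunit
    _ = ‖U.starProjection g‖ := by field_simp

theorem ContinuousLinearMap.isClosed_image_of_mul_norm_le {𝕜 E F : Type*} [Ring 𝕜]
    [NormedAddCommGroup E] [NormedAddCommGroup F] [Module 𝕜 E] [Module 𝕜 F]
    (S : E →L[𝕜] F) (T : Submodule 𝕜 E) [CompleteSpace T] {c : ℝ} (hc : 0 < c)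
    (h : ∀ g ∈ T, c * ‖g‖ ≤ ‖S g‖) : IsClosed (S '' T) := by
  have hanti : AntilipschitzWith ⟨c⁻¹, by positivity⟩ (S.comp T.subtypeL) :=
    (S.comp T.subtypeL).antilipschitz_of_bound fun g => by
      show ‖(g : E)‖ ≤ c⁻¹ * ‖S g‖
      rw [le_inv_mul_iff₀ hc]; exact h g g.2
  have hclosed := hanti.isClosed_range (S.comp T.subtypeL).uniformContinuous
  rwa [ContinuousLinearMap.coe_comp, Set.range_comp, Submodule.coe_subtypeL, Submodule.coe_subtype,
    Subtype.range_coe] at hclosed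

theorem frame_operator_lower_bound_on_T_general
    {H : Type} [NormedAddCommGroup H] [InnerProductSpace ℂ H] [CompleteSpace H]
    (T U : Submodule ℂ H) [CompleteSpace T] [CompleteSpace U]
    (hangle : 0 < cosAngleP T U)
    (u : ℕ → H) (A B : ℝ) (hA : 0 < A) (hframe : IsFrameFor u U A B)
    (S : H →L[ℂ] H) (hS : ∀ f, HasSum (fun j => ⟪u j, f⟫_ℂ • u j) (S f)) :
    (∀ g ∈ T, A * cosAngleP T U * ‖g‖ ≤ ‖S g‖) ∧
      IsClosed (S '' (T : Set H)) := by
  have hbound : ∀ g ∈ T, A * cosAngleP T U * ‖g‖ ≤ ‖S g‖ := fun g hg =>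
    calc A * cosAngleP T U * ‖g‖ = A * (cosAngleP T U * ‖g‖) := mul_assoc _ _ _
      _ ≤ A * ‖U.starProjection g‖ := by gcongr; exact cosAngleP_mul_norm_le hg
      _ ≤ ‖S (U.starProjection g)‖ :=
        mul_norm_le_norm_of_hasSum_frame hS (hframe.2 _ (U.starProjection_apply_mem g)).1
      _ = ‖S g‖ := by rw [map_starProjection_of_hasSum_frame hS U hframe.1]
  exact ⟨hbound, S.isClosed_image_of_mul_norm_le T (mul_pos hA hangle) hbound⟩

/-- If `cos(φ_{T,U}) > 0` and `S` is the frame operator of a frame for `U`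
with bounds `A, B`, then `‖Sg‖ ≥ A cos(φ_{T,U}) ‖g‖` for all `g ∈ T`; in particular
`S(T)` is closed. -/
theorem frame_operator_lower_bound_on_T
    {H : Type} [NormedAddCommGroup H] [InnerProductSpace ℂ H] [CompleteSpace H]
    (T U : Submodule ℂ H) [CompleteSpace T] [CompleteSpace U]
    (hangle : 0 < cosAngleP T U)
    (u : ℕ → H) (A B : ℝ) (hA : 0 < A) (hAB : A ≤ B) (hframe : IsFrameFor u U A B)
    (S : H →L[ℂ] H) (hS : ∀ f, HasSum (fun j => ⟪u j, f⟫_ℂ • u j) (S f)) :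
    (∀ g ∈ T, A * cosAngleP T U * ‖g‖ ≤ ‖S g‖) ∧
      IsClosed (S '' (T : Set H)) :=
  frame_operator_lower_bound_on_T_general T U hangle u A B hA hframe S hS
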